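/- For any family (Aᵢ)_{i ∈ I} of non-singular simplicial sets indexed by a (small) type I, the product ∏ᵢ Aᵢ in the category SSet is a non-singular simplicial set. -/

import Mathlib

open CategoryTheory CategoryTheory.Limits Simplicial SSet

/-- The `i`-th vertex of an `n`-simplex `x`, i.e. `x · εᵢ`, where `εᵢ : [0] ⟶ [n]`
sends `0` to `i`. -/
def SSet.vertex (X : SSet) {n : ℕ} (x : X _⦋n⦌) (i : Fin (n + 1)) : X _⦋0⦌ :=
  X.map (SimplexCategory.const ⦋0⦌ ⦋n⦌ i).op x

/-- A simplex is degenerate if it is obtained from a simplex of strictly lower degree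
by the action of a (necessarily non-identity) epimorphism of the simplex category. -/
def SSet.IsDegenerate (X : SSet) {n : ℕ} (x : X _⦋n⦌) : Prop :=
  ∃ (m : ℕ) (_ : m < n) (σ : (⦋n⦌ : SimplexCategory) ⟶ ⦋m⦌) (y : X _⦋m⦌),
    Epi σ ∧ x = X.map σ.op y

/-- A simplicial set is non-singular if the representing map of each of its
non-degenerate simplices is a monomorphism. -/
def SSet.NonSingular (X : SSet) : Prop :=
  ∀ (n : ℕ) (x : X _⦋n⦌), ¬ X.IsDegenerate x → Mono ((SSet.yonedaEquiv (X := X) (n := ⦋n⦌)).symm x)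

/-- The relation `≈ₓ` on `Fin (n + 1)`: `i ≈ₓ k` iff there exists `j` with
`i ≤ k`, `k ≤ j` and `x·εᵢ = x·εⱼ`. -/
def SSet.approxRel (X : SSet) {n : ℕ} (x : X _⦋n⦌) (i k : Fin (n + 1)) : Prop :=
  ∃ j, i ≤ k ∧ k ≤ j ∧ X.vertex x i = X.vertex x j

/-- The equivalence relation `Rₓ` generated by `≈ₓ`. -/
def SSet.vertexRel (X : SSet) {n : ℕ} (x : X _⦋n⦌) : Fin (n + 1) → Fin (n + 1) → Prop :=
  Relation.EqvGen (X.approxRel x)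

/-!
In a non-singular simplicial set, write a simplex as `x = f^* y` with `y` non-degenerate. The
vertices of `y` are pairwise distinct, so if two vertices `a < b` of `x` agree then `f` identifies
`a` and `a + 1`, hence factors through `σ a`, and `x = s_a d_{a+1} x`. This identity is checked
componentwise in a product, so a non-degenerate simplex of `∏ᵢ Aᵢ` has pairwise distinct
vertices, and a simplex with pairwise distinct vertices represents a monomorphism `Δ[n] ⟶ X`.
-/

universe u

open SimplexCategory Opposite

namespace SSet

variable {X : SSet.{u}}

lemma isDegenerate_iff_mem_degenerate {n : ℕ} (x : X _⦋n⦌) :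
    X.IsDegenerate x ↔ x ∈ X.degenerate n := by
  rw [mem_degenerate_iff]
  simp only [IsDegenerate, Set.mem_range, eq_comm (a := x)]
  constructor
  · rintro ⟨m, hm, σ, y, hσ, rfl⟩
    exact ⟨m, hm, σ, hσ, y, rfl⟩
  · rintro ⟨m, hm, σ, hσ, y, rfl⟩
    exact ⟨m, hm, σ, y, hσ, rfl⟩

lemma nonSingular_iff_nonsingular : X.NonSingular ↔ X.Nonsingular := by
  simp only [NonSingular, isDegenerate_iff_mem_degenerate,
    ← mem_nonDegenerate_iff_notMem_degenerate]
  exact ⟨fun h ↦ ⟨fun x ↦ h _ x.1 x.2⟩, fun _ n x hx ↦ Nonsingular.mono' x hx⟩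

lemma vertex_map {n m : ℕ} (f : ⦋n⦌ ⟶ ⦋m⦌) (x : X _⦋m⦌) (j : Fin (n + 1)) :
    X.vertex (X.map f.op x) j = X.vertex x (f.toOrderHom j) := by
  rw [vertex, vertex, ← Functor.map_comp_apply, ← op_comp, SimplexCategory.const_comp]

lemma vertex_app {Y : SSet.{u}} (g : X ⟶ Y) {n : ℕ} (x : X _⦋n⦌) (j : Fin (n + 1)) :
    Y.vertex (g.app _ x) j = g.app _ (X.vertex x j) :=
  (NatTrans.naturality_apply g _ x).symm

lemma Nonsingular.vertex_injective [X.Nonsingular] {n : ℕ} {x : X _⦋n⦌}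
    (hx : x ∈ X.nonDegenerate n) : Function.Injective (X.vertex x) := fun i j hij ↦ by
  simpa using congr_toOrderHom_apply (Nonsingular.injective_map x hx hij) 0

lemma mono_yonedaEquiv_symm_of_vertex_injective {n : ℕ} {x : X _⦋n⦌}
    (hx : Function.Injective (X.vertex x)) : Mono (yonedaEquiv.symm x) := by
  rw [NatTrans.mono_iff_mono_app]
  rintro ⟨m⟩
  induction m using SimplexCategory.rec with | _ m
  rw [CategoryTheory.mono_iff_injective]
  intro f g hfg
  obtain ⟨f, rfl⟩ := stdSimplex.objEquiv.symm.surjective f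
  obtain ⟨g, rfl⟩ := stdSimplex.objEquiv.symm.surjective g
  ext j : 1
  have hj : X.vertex (X.map f.op x) j = X.vertex (X.map g.op x) j :=
    congr_arg (X.vertex · j) hfg
  rw [vertex_map, vertex_map] at hj
  exact hx hj

lemma Nonsingular.eq_σ_δ_of_vertex_eq [X.Nonsingular] {n : ℕ} (x : X _⦋n + 1⦌)
    (a : Fin (n + 1)) (b : Fin (n + 2)) (hab : a.castSucc < b)
    (h : X.vertex x a.castSucc = X.vertex x b) :
    x = X.σ a (X.δ a.succ x) := by
  obtain ⟨m, f, _, ⟨y, hy⟩, rfl⟩ := X.exists_nonDegenerate x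
  have hfab : f.toOrderHom a.castSucc = f.toOrderHom b :=
    Nonsingular.vertex_injective hy (by rwa [vertex_map, vertex_map] at h)
  have hfa : f.toOrderHom a.castSucc = f.toOrderHom a.succ :=
    le_antisymm (f.toOrderHom.monotone (Fin.castSucc_le_succ a))
      (hfab ▸ f.toOrderHom.monotone (Fin.castSucc_lt_iff_succ_le.mp hab))
  obtain ⟨g, rfl⟩ := eq_σ_comp_of_not_injective' f a hfa
  rw [SimplicialObject.σ, SimplicialObject.δ, ← Functor.map_comp_apply,
    ← Functor.map_comp_apply, ← op_comp, ← op_comp, Category.assoc, δ_comp_σ_succ_assoc]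

lemma Pi.obj_ext {I : Type u} (A : I → SSet.{u}) {n : ℕ} {x y : (∏ᶜ A) _⦋n⦌}
    (h : ∀ i, (Pi.π A i).app _ x = (Pi.π A i).app _ y) : x = y := by
  apply yonedaEquiv.symm.injective
  refine Pi.hom_ext _ _ fun i ↦ ?_
  rw [yonedaEquiv_symm_comp, yonedaEquiv_symm_comp, h i]

instance Nonsingular.pi {I : Type u} (A : I → SSet.{u}) [∀ i, (A i).Nonsingular] :
    (∏ᶜ A).Nonsingular where
  mono := by
    rintro n ⟨x, hx⟩
    refine mono_yonedaEquiv_symm_of_vertex_injective (.of_lt_imp_ne fun p q hpq hv ↦ ?_)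
    obtain _ | k := n
    · exact hpq.ne (Fin.subsingleton_one.elim p q)
    obtain ⟨a, rfl⟩ := Fin.exists_castSucc_eq.mpr (hpq.trans_le (Fin.le_last q)).ne
    refine hx ?_
    have hx_eq : x = (∏ᶜ A).σ a ((∏ᶜ A).δ a.succ x) := Pi.obj_ext A fun i ↦ by
      rw [σ_naturality_apply, δ_naturality_apply]
      exact Nonsingular.eq_σ_δ_of_vertex_eq _ a q hpq (by rw [vertex_app, vertex_app, hv])
    exact hx_eq ▸ σ_mem_degenerate _ _ _

end SSet

/-- A product of non-singular simplicial sets is non-singular. -/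
theorem nonsingular_pi {I : Type} (A : I → SSet.{0}) (h : ∀ i, (A i).NonSingular) :
    SSet.NonSingular (∏ᶜ A) := by
  have (i : I) : (A i).Nonsingular := nonSingular_iff_nonsingular.mp (h i)
  exact nonSingular_iff_nonsingular.mpr (Nonsingular.pi A)
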